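/- arXiv:2106.14592 — 6 statements merged into one kernel-verified Lean document; each statement's English description precedes it below -/
import Mathlib

section
/- Let A, R, S be real r×r matrices and suppose P∞ is a positive definite solution and P∞⁻ is a negative definite solution of the algebraic Riccati equation AP + PAᵀ + R − PSP = 0, with (A − P∞S) Hurwitz. Define the Gramian Δ∞ = ∫₀^∞ exp(s(A − P∞S)ᵀ) S exp(s(A − P∞S)) ds and assume Δ∞ is positive definite and invertible. Then Tr(S P∞) = 2 Tr(A) − Tr(S P∞⁻), provided P∞ − P∞⁻ = Δ∞⁻¹. -/
open Matrix Real MeasureTheory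

/-!
Subtracting the Riccati equations of `P∞` and `P∞⁻` gives
`(A - P∞ S) (P∞ - P∞⁻) + (P∞ - P∞⁻) (Aᵀ - S P∞⁻) = 0`. Since `P∞ - P∞⁻ = Δ∞⁻¹` is invertible,
`A - P∞ S` is similar to `-(Aᵀ - S P∞⁻)`, so their traces agree up to sign; expanding both
traces gives the identity.
-/

/-- A real square matrix is Hurwitz if all its (complex) eigenvalues have
negative real part. -/
def IsHurwitz {r : ℕ} (M : Matrix (Fin r) (Fin r) ℝ) : Prop :=
  ∀ μ ∈ spectrum ℂ (M.map (algebraMap ℝ ℂ)), μ.re < 0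

theorem riccati_sub_intertwines {α : Type*} [Ring α] {A B R S P Q : α}
    (hP : A * P + P * B + R - P * S * P = 0) (hQ : A * Q + Q * B + R - Q * S * Q = 0) :
    (A - P * S) * (P - Q) + (P - Q) * (B - S * Q) = 0 := by
  calc (A - P * S) * (P - Q) + (P - Q) * (B - S * Q)
      = (A * P + P * B + R - P * S * P) - (A * Q + Q * B + R - Q * S * Q) := by noncomm_ring
    _ = 0 := by rw [hP, hQ, sub_self]

theorem Matrix.trace_eq_neg_of_mul_add_mul_eq_zero {n R : Type*} [Fintype n] [DecidableEq n]
    [CommRing R] {X Y D : Matrix n n R} (hD : IsUnit D) (h : X * D + D * Y = 0) :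
    X.trace = -Y.trace := by
  have hdet : IsUnit D.det := (isUnit_iff_isUnit_det D).mp hD
  have hY : Y = -(D⁻¹ * X * D) := by
    have := congrArg (D⁻¹ * ·) h
    simp only [mul_add, ← mul_assoc, nonsing_inv_mul D hdet, one_mul, mul_zero] at this
    exact eq_neg_of_add_eq_zero_right this
  rw [hY, trace_neg, trace_mul_cycle, mul_nonsing_inv D hdet, one_mul, neg_neg]

theorem trace_identity_gramian_general {r : ℕ} (A R S Pp Pm : Matrix (Fin r) (Fin r) ℝ)
    (hRiccPp : A * Pp + Pp * Aᵀ + R - Pp * S * Pp = 0)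
    (hRiccPm : A * Pm + Pm * Aᵀ + R - Pm * S * Pm = 0)
    (Δ : Matrix (Fin r) (Fin r) ℝ)
    (hΔinv : IsUnit Δ)
    (hfix : Pp - Pm = Δ⁻¹) :
    (S * Pp).trace = 2 * A.trace - (S * Pm).trace := by
  have hdiff : IsUnit (Pp - Pm) := hfix ▸ (isUnit_nonsing_inv_iff).mpr hΔinv
  have htrace :=
    trace_eq_neg_of_mul_add_mul_eq_zero hdiff (riccati_sub_intertwines hRiccPp hRiccPm)
  rw [trace_sub, trace_sub, trace_mul_comm Pp S, trace_transpose] at htrace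
  linarith

/-- `Tr(S P∞) = 2 Tr(A) − Tr(S P∞⁻)` given the Gramian fixed point
formula `P∞ − P∞⁻ = Δ∞⁻¹`. -/
theorem trace_identity_gramian {r : ℕ} (A R S Pp Pm : Matrix (Fin r) (Fin r) ℝ)
    (hPp : Pp.PosDef) (hPm : (-Pm).PosDef)
    (hRiccPp : A * Pp + Pp * Aᵀ + R - Pp * S * Pp = 0)
    (hRiccPm : A * Pm + Pm * Aᵀ + R - Pm * S * Pm = 0)
    (hHur : IsHurwitz (A - Pp * S))
    (Δ : Matrix (Fin r) (Fin r) ℝ)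
    (hΔdef : Δ = Matrix.of fun i j =>
      ∫ s in Set.Ioi (0 : ℝ),
        (NormedSpace.exp (s • (A - Pp * S)ᵀ) * S * NormedSpace.exp (s • (A - Pp * S))) i j)
    (hΔpos : Δ.PosDef) (hΔinv : IsUnit Δ)
    (hfix : Pp - Pm = Δ⁻¹) :
    (S * Pp).trace = 2 * A.trace - (S * Pm).trace :=
  trace_identity_gramian_general A R S Pp Pm hRiccPp hRiccPm Δ hΔinv hfix
end

section
/- Let A, R, S be real r×r matrices, P∞ a positive definite solution and P∞⁻ a negative definite solution of the algebraic Riccati equation AP + PAᵀ + R − PSP = 0. Then Tr(S P∞) = Tr(Q∞ R), where Q∞ := −(P∞⁻)⁻¹. -/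
/-!
Since `Tr(X⁻¹ (A X + X B)) = Tr A + Tr B` for invertible `X`, the trace of `P⁻¹ Ricc(P) = 0`
gives `Tr(S P∞⁻) = 2 Tr A + Tr((P∞⁻)⁻¹ R)`. Subtracting the two Riccati equations gives the
Sylvester equation `A D + D Aᵀ = P∞ S D + D S P∞⁻` for `D = P∞ − P∞⁻`, which is positive
definite; tracing `D⁻¹` against it yields `Tr(S P∞) + Tr(S P∞⁻) = 2 Tr A`. Eliminating `Tr A` gives the claim.
-/

open Matrix

namespace Matrix

variable {n α : Type*} [Fintype n] [DecidableEq n] [CommRing α]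

def riccati (A R S P : Matrix n n α) : Matrix n n α :=
  A * P + P * Aᵀ + R - P * S * P

theorem trace_inv_mul_mul_add_mul {X : Matrix n n α} (hX : IsUnit X) (A B : Matrix n n α) :
    (X⁻¹ * (A * X + X * B)).trace = A.trace + B.trace := by
  have hX : IsUnit X.det := (isUnit_iff_isUnit_det X).mp hX
  rw [mul_add, trace_add, trace_mul_comm, mul_nonsing_inv_cancel_right _ _ hX,
    nonsing_inv_mul_cancel_left _ _ hX]

theorem trace_mul_eq_of_riccati_eq_zero {A R S P : Matrix n n α} (hP : IsUnit P)
    (hRicc : riccati A R S P = 0) :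
    (S * P).trace = 2 * A.trace + (P⁻¹ * R).trace := by
  have hPSP : P * S * P = A * P + P * Aᵀ + R := (sub_eq_zero.mp hRicc).symm
  calc (S * P).trace = (P⁻¹ * (P * (S * P))).trace := by
        rw [nonsing_inv_mul_cancel_left _ _ ((isUnit_iff_isUnit_det P).mp hP)]
    _ = (P⁻¹ * (A * P + P * Aᵀ)).trace + (P⁻¹ * R).trace := by
        rw [← mul_assoc P, hPSP, mul_add, trace_add]
    _ = 2 * A.trace + (P⁻¹ * R).trace := by
        rw [trace_inv_mul_mul_add_mul hP, trace_transpose, two_mul]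

theorem trace_mul_add_trace_mul_of_riccati_eq_zero {A R S P₁ P₂ : Matrix n n α}
    (hD : IsUnit (P₁ - P₂)) (hRicc₁ : riccati A R S P₁ = 0) (hRicc₂ : riccati A R S P₂ = 0) :
    (S * P₁).trace + (S * P₂).trace = 2 * A.trace := by
  set D := P₁ - P₂
  have hSylvester : A * D + D * Aᵀ = P₁ * S * D + D * (S * P₂) := by
    have h := congrArg₂ (· - ·) hRicc₁ hRicc₂
    simp only [riccati, sub_zero] at h
    rw [← sub_eq_zero, ← h]
    simp only [D]
    noncomm_ring
  have h := congrArg (fun M => (D⁻¹ * M).trace) hSylvester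
  simp only [trace_inv_mul_mul_add_mul hD, trace_transpose] at h
  rw [trace_mul_comm S P₁]
  linear_combination -h

end Matrix

/-- `Tr(S P∞) = Tr(Q∞ R)` with `Q∞ = −(P∞⁻)⁻¹`. -/
theorem trace_SP_eq_trace_QR {r : ℕ} (A R S Pp Pm : Matrix (Fin r) (Fin r) ℝ)
    (hPp : Pp.PosDef) (hPm : (-Pm).PosDef)
    (hRiccPp : A * Pp + Pp * Aᵀ + R - Pp * S * Pp = 0)
    (hRiccPm : A * Pm + Pm * Aᵀ + R - Pm * S * Pm = 0) :
    (S * Pp).trace = (-(Pm⁻¹) * R).trace := by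
  have hPm_unit : IsUnit Pm := by simpa using hPm.isUnit.neg
  have hD : (Pp - Pm).PosDef := by simpa [sub_eq_add_neg] using hPp.add hPm
  have hSum := trace_mul_add_trace_mul_of_riccati_eq_zero hD.isUnit hRiccPp hRiccPm
  have hPmTrace := trace_mul_eq_of_riccati_eq_zero hPm_unit hRiccPm
  rw [neg_mul, trace_neg]
  linarith
end

section
/- Let A, R be real r×r matrices with R positive definite and AR = RAᵀ, and let S be positive semi-definite. Then A² + RS = R(AᵀR⁻¹A + S) and A² + RS = R((Aᵀ)² + SR)R⁻¹; in particular A² + RS is similar to the product of the positive definite matrix R and the positive semi-definite matrix AᵀR⁻¹A + S, hence all eigenvalues of A² + RS are real and non-negative. -/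
/-!
Reversibility `A R = R Aᵀ` says that `R` conjugates `Aᵀ` into `A`, which gives both identities.
For the spectrum, write `A² + R S = R M` with `M = Aᵀ R⁻¹ A + S ⪰ 0`. With `Q = √R`, the products
`R M = Q (Q M)` and `(Q M) Q = Q M Q` have the same nonzero eigenvalues, and `Q M Q ⪰ 0`.
-/

open Matrix
open scoped ComplexOrder MatrixOrder

namespace Matrix

variable {n : Type*} [Fintype n] {𝕜 : Type*} [RCLike 𝕜]

theorem PosSemidef.map_ofReal {N : Matrix n n ℝ} (hN : N.PosSemidef) :
    (N.map (algebraMap ℝ 𝕜)).PosSemidef := by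
  classical
  obtain ⟨B, rfl⟩ := CStarAlgebra.nonneg_iff_eq_star_mul_self.mp hN.nonneg
  rw [star_eq_conjTranspose, Matrix.map_mul, conjTranspose_map _ (fun x => by simp)]
  exact posSemidef_conjTranspose_mul_self _

variable [DecidableEq n]

theorem mul_transpose_pow_mul_inv_of_mul_eq_mul_transpose {α : Type*} [CommRing α]
    {A R : Matrix n n α} (hR : IsUnit R.det) (hrev : A * R = R * Aᵀ) (k : ℕ) :
    R * Aᵀ ^ k * R⁻¹ = A ^ k := by
  have hconj : SemiconjBy R Aᵀ A := hrev.symm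
  rw [(hconj.pow_right k).eq, mul_nonsing_inv_cancel_right _ _ hR]

theorem PosSemidef.spectrum_mul_nonneg {P M : Matrix n n 𝕜} (hP : P.PosSemidef)
    (hM : M.PosSemidef) : spectrum 𝕜 (P * M) ⊆ {a | 0 ≤ a} := by
  set Q := CFC.sqrt P
  have hQ : Q.PosSemidef := (CFC.sqrt_nonneg P).posSemidef
  have hQMQ : (Q * M * Q).PosSemidef := by
    simpa only [hQ.isHermitian.eq] using hM.mul_mul_conjTranspose_same Q
  intro μ hμ
  by_cases h0 : μ = 0
  · simp [h0]
  have hμ' : μ ∈ spectrum 𝕜 (Q * M * Q) \ {0} := by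
    rw [← spectrum.nonzero_mul_comm, ← mul_assoc, CFC.sqrt_mul_sqrt_self P hP.nonneg]
    exact ⟨hμ, h0⟩
  exact (posSemidef_iff_isHermitian_and_spectrum_nonneg.mp hQMQ).2 hμ'.1

end Matrix

/-- under the reversibility condition `AR = RAᵀ` with `R ≻ 0` and
`S ⪰ 0`, we have `A² + RS = R(AᵀR⁻¹A + S) = R((Aᵀ)² + SR)R⁻¹`, and all the
(complex) eigenvalues of `A² + RS` are real and non-negative. -/
theorem A_sq_add_RS_eigenvalues {r : ℕ} (A R S : Matrix (Fin r) (Fin r) ℝ)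
    (hR : R.PosDef) (hrev : A * R = R * Aᵀ) (hS : S.PosSemidef) :
    A ^ 2 + R * S = R * (Aᵀ * R⁻¹ * A + S) ∧
    A ^ 2 + R * S = R * ((Aᵀ) ^ 2 + S * R) * R⁻¹ ∧
    ∀ μ ∈ spectrum ℂ ((A ^ 2 + R * S).map (algebraMap ℝ ℂ)), μ.im = 0 ∧ 0 ≤ μ.re := by
  have hdet : IsUnit R.det := (isUnit_iff_isUnit_det R).mp hR.isUnit
  have hconj := mul_transpose_pow_mul_inv_of_mul_eq_mul_transpose hdet hrev
  have eq1 : A ^ 2 + R * S = R * (Aᵀ * R⁻¹ * A + S) := by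
    rw [mul_add, ← mul_assoc, ← mul_assoc, ← pow_one Aᵀ, hconj 1, pow_one, sq]
  have eq2 : A ^ 2 + R * S = R * ((Aᵀ) ^ 2 + S * R) * R⁻¹ := by
    rw [mul_add, add_mul, hconj 2, ← mul_assoc, mul_nonsing_inv_cancel_right _ _ hdet]
  refine ⟨eq1, eq2, fun μ hμ => ?_⟩
  have hM : (Aᵀ * R⁻¹ * A + S).PosSemidef := by
    refine PosSemidef.add ?_ hS
    simpa [conjTranspose_eq_transpose_of_trivial, mul_assoc] using
      hR.inv.posSemidef.conjTranspose_mul_mul_same A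
  rw [eq1, Matrix.map_mul] at hμ
  obtain ⟨hre, him⟩ := Complex.nonneg_iff.mp
    (hR.posSemidef.map_ofReal.spectrum_mul_nonneg hM.map_ofReal hμ)
  exact ⟨him.symm, hre⟩
end

section
/- Let A, R, S be real r×r matrices with R positive definite, AR = RAᵀ, and S positive semi-definite such that A² + RS has a square root M = (A² + RS)^{1/2} with all eigenvalues positive. Define Q∞ = R⁻¹A + R⁻¹M. Then Q∞ satisfies the algebraic Riccati equation AᵀQ∞ + Q∞A − Q∞RQ∞ + S = 0, and A − RQ∞ = −M. -/
open Matrix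

/-! With `Q = R⁻¹(A + M)` one has `R Q = A + M`, so the closed-loop matrix is `A - R Q = -M`.
Reversibility gives `Aᵀ = R⁻¹ A R`, which turns every term of the Riccati expression into
`R⁻¹` times a polynomial in `A` and `M`; these collapse to `R⁻¹ (A² - M²) + S = R⁻¹ (-R S) + S = 0`. -/

namespace Matrix

variable {n α : Type*} [Fintype n] [DecidableEq n] [CommRing α] {A R S M : Matrix n n α}

theorem transpose_eq_inv_mul_mul_of_mul_eq_mul_transpose (hR : IsUnit R.det)
    (hrev : A * R = R * Aᵀ) : Aᵀ = R⁻¹ * A * R := by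
  rw [mul_assoc, hrev, nonsing_inv_mul_cancel_left _ _ hR]

theorem sub_mul_inv_mul_add_eq_neg (hR : IsUnit R.det) :
    A - R * (R⁻¹ * A + R⁻¹ * M) = -M := by
  rw [← mul_add, mul_nonsing_inv_cancel_left _ _ hR]
  abel

theorem riccati_eq_zero_of_mul_self_eq (hR : IsUnit R.det) (hrev : A * R = R * Aᵀ)
    (hM : M * M = A ^ 2 + R * S) :
    Aᵀ * (R⁻¹ * A + R⁻¹ * M) + (R⁻¹ * A + R⁻¹ * M) * A
        - (R⁻¹ * A + R⁻¹ * M) * R * (R⁻¹ * A + R⁻¹ * M) + S = 0 := by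
  have hRR : R * R⁻¹ = 1 := mul_nonsing_inv R hR
  have hS : S = R⁻¹ * (M * M) - R⁻¹ * (A * A) := by
    rw [hM, sq, mul_add, nonsing_inv_mul_cancel_left _ _ hR, add_sub_cancel_left]
  rw [transpose_eq_inv_mul_mul_of_mul_eq_mul_transpose hR hrev, hS]
  simp only [mul_add, add_mul, mul_assoc, ← mul_assoc R R⁻¹, hRR, one_mul]
  abel

end Matrix

theorem reversible_riccati_solution_general {r : ℕ} (A R S M : Matrix (Fin r) (Fin r) ℝ)
    (hR : R.PosDef) (hrev : A * R = R * Aᵀ)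
    (hM : M * M = A ^ 2 + R * S) :
    Aᵀ * (R⁻¹ * A + R⁻¹ * M) + (R⁻¹ * A + R⁻¹ * M) * A
        - (R⁻¹ * A + R⁻¹ * M) * R * (R⁻¹ * A + R⁻¹ * M) + S = 0 ∧
    A - R * (R⁻¹ * A + R⁻¹ * M) = -M := by
  have hdet : IsUnit R.det := hR.isUnit.map detMonoidHom
  exact ⟨riccati_eq_zero_of_mul_self_eq hdet hrev hM, sub_mul_inv_mul_add_eq_neg hdet⟩

/-- in the reversible case, `Q∞ = R⁻¹A + R⁻¹(A² + RS)^{1/2}`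
solves the algebraic Riccati equation `AᵀQ∞ + Q∞A − Q∞RQ∞ + S = 0`, and
`A − RQ∞ = −(A² + RS)^{1/2}`. -/
theorem reversible_riccati_solution {r : ℕ} (A R S M : Matrix (Fin r) (Fin r) ℝ)
    (hR : R.PosDef) (hrev : A * R = R * Aᵀ) (hS : S.PosSemidef)
    (hM : M * M = A ^ 2 + R * S)
    (hMspec : ∀ μ ∈ spectrum ℂ (M.map (algebraMap ℝ ℂ)), μ.im = 0 ∧ 0 < μ.re) :
    Aᵀ * (R⁻¹ * A + R⁻¹ * M) + (R⁻¹ * A + R⁻¹ * M) * A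
        - (R⁻¹ * A + R⁻¹ * M) * R * (R⁻¹ * A + R⁻¹ * M) + S = 0 ∧
    A - R * (R⁻¹ * A + R⁻¹ * M) = -M :=
  reversible_riccati_solution_general A R S M hR hrev hM
end

section
/- Let P and Q be real symmetric positive definite r×r matrices with principal square roots P^{1/2}, Q^{1/2}. Then ‖P^{1/2} − Q^{1/2}‖ ≤ ‖P − Q‖ / (λ_min(P)^{1/2} + λ_min(Q)^{1/2}), where ‖·‖ is the spectral norm and λ_min denotes the smallest eigenvalue. -/
/-!
Put `X = P^{1/2} - Q^{1/2}`, so that `P - Q = P^{1/2} X + X Q^{1/2}`. For a unit eigenvector `v`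
of the symmetric matrix `X` with eigenvalue `μ` this gives
`⟪v, (P - Q) v⟫ = μ (⟪v, P^{1/2} v⟫ + ⟪v, Q^{1/2} v⟫)`. Every eigenvalue `ν` of `P^{1/2}` satisfies
`ν² ≥ λ_min(P)`, since `ν²` is a Rayleigh quotient of `P`; so the bracket is at least
`λ_min(P)^{1/2} + λ_min(Q)^{1/2}`, and `|μ|` times it is at most `‖P - Q‖`. Bounding all eigenvalues
of `X` in this way bounds its spectral norm.
-/

open Matrix
open scoped Matrix.Norms.L2Operator RealInnerProductSpace ComplexOrder

namespace OrthonormalBasis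

variable {ι E : Type*} [Fintype ι] [NormedAddCommGroup E] [InnerProductSpace ℝ E]
  (b : OrthonormalBasis ι ℝ E) {T : E →L[ℝ] E} {μ : ι → ℝ}

theorem inner_apply_eq_mul_inner (hb : ∀ i, T (b i) = μ i • b i) (v : E) (i : ι) :
    ⟪b i, T v⟫ = μ i * ⟪b i, v⟫ := by
  conv_lhs => rw [← b.sum_repr' v]
  simp only [map_sum, map_smul, hb, smul_smul]
  rw [b.orthonormal.inner_right_fintype, mul_comm]

theorem inner_self_apply_eq_sum (hb : ∀ i, T (b i) = μ i • b i) (v : E) :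
    ⟪v, T v⟫ = ∑ i, μ i * ⟪b i, v⟫ ^ 2 := by
  rw [← b.sum_inner_mul_inner]
  refine Finset.sum_congr rfl fun i _ => ?_
  rw [b.inner_apply_eq_mul_inner hb, real_inner_comm]
  ring

theorem mul_norm_sq_le_inner_self_apply (hb : ∀ i, T (b i) = μ i • b i) {c : ℝ}
    (hc : ∀ i, c ≤ μ i) (v : E) : c * ‖v‖ ^ 2 ≤ ⟪v, T v⟫ := by
  rw [b.inner_self_apply_eq_sum hb, ← b.sum_sq_inner_right, Finset.mul_sum]
  gcongr with i
  exact hc i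

theorem opNorm_le_of_forall_abs_le (hb : ∀ i, T (b i) = μ i • b i) {C : ℝ} (hC : 0 ≤ C)
    (h : ∀ i, |μ i| ≤ C) : ‖T‖ ≤ C := by
  refine T.opNorm_le_bound hC fun v => ?_
  refine pow_le_pow_iff_left₀ (norm_nonneg _) (by positivity) two_ne_zero |>.1 ?_
  rw [mul_pow, ← b.sum_sq_inner_right, ← b.sum_sq_inner_right, Finset.mul_sum]
  gcongr with i
  rw [b.inner_apply_eq_mul_inner hb, mul_pow, ← sq_abs (μ i)]
  gcongr
  exact h i

end OrthonormalBasis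

section SquareDifference

variable {E : Type*} [NormedAddCommGroup E] [InnerProductSpace ℝ E] [CompleteSpace E]

theorem inner_mul_self_sub_mul_self_apply {S T : E →L[ℝ] E} (hST : IsSelfAdjoint (S - T))
    {v : E} {μ : ℝ} (hv : (S - T) v = μ • v) :
    ⟪v, (S * S - T * T) v⟫ = μ * (⟪v, S v⟫ + ⟪v, T v⟫) := by
  have hsplit : S * S - T * T = S * (S - T) + (S - T) * T := by noncomm_ring
  have hsymm : ⟪v, (S - T) (T v)⟫ = ⟪(S - T) v, T v⟫ := (hST.isSymmetric v (T v)).symm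
  rw [hsplit, _root_.add_apply, mul_apply_eq_comp, mul_apply_eq_comp, inner_add_right, hsymm, hv,
    map_smul, real_inner_smul_right, real_inner_smul_left, mul_add]

theorem abs_mul_le_norm_mul_self_sub_mul_self {S T : E →L[ℝ] E} (hST : IsSelfAdjoint (S - T))
    {v : E} (hv1 : ‖v‖ = 1) {μ : ℝ} (hv : (S - T) v = μ • v) {c : ℝ} (hc0 : 0 ≤ c)
    (hc : c ≤ ⟪v, S v⟫ + ⟪v, T v⟫) : |μ| * c ≤ ‖S * S - T * T‖ :=
  calc |μ| * c ≤ |μ| * (⟪v, S v⟫ + ⟪v, T v⟫) := by gcongr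
    _ = |⟪v, (S * S - T * T) v⟫| := by
        rw [inner_mul_self_sub_mul_self_apply hST hv, abs_mul, abs_of_nonneg (hc0.trans hc)]
    _ ≤ ‖v‖ * ‖(S * S - T * T) v‖ := abs_real_inner_le_norm _ _
    _ ≤ ‖S * S - T * T‖ := by
        simpa [hv1] using (S * S - T * T).le_opNorm v

end SquareDifference

namespace Matrix

variable {n : Type*} [Fintype n] [DecidableEq n]

theorem PosDef.iInf_eigenvalues_pos {𝕜 : Type*} [RCLike 𝕜] [Nonempty n] {A : Matrix n n 𝕜}
    (hA : A.PosDef) : 0 < ⨅ i, hA.1.eigenvalues i := by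
  obtain ⟨i, hi⟩ := exists_eq_ciInf_of_finite (f := hA.1.eigenvalues)
  exact hi ▸ hA.eigenvalues_pos i

theorem IsHermitian.toEuclideanCLM_eigenvectorBasis {A : Matrix n n ℝ} (hA : A.IsHermitian)
    (i : n) :
    toEuclideanCLM (𝕜 := ℝ) A (hA.eigenvectorBasis i) =
      hA.eigenvalues i • hA.eigenvectorBasis i :=
  (WithLp.equiv 2 (n → ℝ)).injective (by simpa using hA.mulVec_eigenvectorBasis i)

theorem PosSemidef.sqrt_iInf_eigenvalues_le {S M : Matrix n n ℝ} (hS : S.PosSemidef)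
    (hM : M.IsHermitian) (hSM : S * S = M) (i : n) :
    √(⨅ j, hM.eigenvalues j) ≤ hS.1.eigenvalues i := by
  set u := hS.1.eigenvectorBasis i
  have hu : ‖u‖ = 1 := hS.1.eigenvectorBasis.orthonormal.1 i
  have hMu : toEuclideanCLM (𝕜 := ℝ) M u = (hS.1.eigenvalues i ^ 2) • u := by
    rw [← hSM, map_mul, mul_apply_eq_comp, hS.1.toEuclideanCLM_eigenvectorBasis, map_smul,
      hS.1.toEuclideanCLM_eigenvectorBasis, smul_smul, sq]
  have hRayleigh := hM.eigenvectorBasis.mul_norm_sq_le_inner_self_apply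
    hM.toEuclideanCLM_eigenvectorBasis (fun j => ciInf_le (Finite.bddBelow_range _) j) u
  rw [hMu, real_inner_smul_right, real_inner_self_eq_norm_sq, hu] at hRayleigh
  exact (Real.sqrt_le_left (hS.eigenvalues_nonneg i)).2 (by simpa using hRayleigh)

theorem IsHermitian.norm_sub_le_norm_mul_self_sub_mul_self_div {S T : Matrix n n ℝ}
    (hS : S.IsHermitian) (hT : T.IsHermitian) {a b : ℝ} (ha : ∀ i, a ≤ hS.eigenvalues i)
    (hb : ∀ i, b ≤ hT.eigenvalues i) (hab : 0 < a + b) :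
    ‖S - T‖ ≤ ‖S * S - T * T‖ / (a + b) := by
  have hX : (S - T).IsHermitian := hS.sub hT
  refine hX.eigenvectorBasis.opNorm_le_of_forall_abs_le hX.toEuclideanCLM_eigenvectorBasis
    (by positivity) fun i => (le_div_iff₀ hab).2 ?_
  set v := hX.eigenvectorBasis i
  have hv : ‖v‖ = 1 := hX.eigenvectorBasis.orthonormal.1 i
  have hRayleigh {A : Matrix n n ℝ} (hA : A.IsHermitian) {c : ℝ} (hc : ∀ i, c ≤ hA.eigenvalues i) :
      c ≤ ⟪v, toEuclideanCLM (𝕜 := ℝ) A v⟫ := by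
    simpa [hv] using hA.eigenvectorBasis.mul_norm_sq_le_inner_self_apply
      hA.toEuclideanCLM_eigenvectorBasis hc v
  have := abs_mul_le_norm_mul_self_sub_mul_self (S := toEuclideanCLM (𝕜 := ℝ) S)
    (T := toEuclideanCLM (𝕜 := ℝ) T) (by simpa only [← map_sub] using hX.isSelfAdjoint.map _) hv
    (by simpa only [← map_sub] using hX.toEuclideanCLM_eigenvectorBasis i) hab.le
    (add_le_add (hRayleigh hS ha) (hRayleigh hT hb))
  rwa [← map_mul, ← map_mul, ← map_sub] at this

end Matrix

theorem ando_van_hemmen_general {r : ℕ}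
    (P Q sP sQ : Matrix (Fin r) (Fin r) ℝ)
    (hP : P.PosDef) (hQ : Q.PosDef)
    (hsP : sP.PosDef) (hsQ : sQ.PosDef)
    (hsP2 : sP * sP = P) (hsQ2 : sQ * sQ = Q) :
    ‖sP - sQ‖ ≤ ‖P - Q‖ /
      (Real.sqrt (⨅ i, hP.1.eigenvalues i) + Real.sqrt (⨅ i, hQ.1.eigenvalues i)) := by
  rcases isEmpty_or_nonempty (Fin r) with _ | _
  · rw [Subsingleton.elim (sP - sQ) 0, norm_zero]
    positivity
  have hpos : 0 < √(⨅ i, hP.1.eigenvalues i) + √(⨅ i, hQ.1.eigenvalues i) :=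
    add_pos (Real.sqrt_pos.2 hP.iInf_eigenvalues_pos) (Real.sqrt_pos.2 hQ.iInf_eigenvalues_pos)
  calc ‖sP - sQ‖ ≤ ‖sP * sP - sQ * sQ‖ / _ :=
        hsP.1.norm_sub_le_norm_mul_self_sub_mul_self_div hsQ.1
          (hsP.posSemidef.sqrt_iInf_eigenvalues_le hP.1 hsP2)
          (hsQ.posSemidef.sqrt_iInf_eigenvalues_le hQ.1 hsQ2) hpos
    _ = _ := by rw [hsP2, hsQ2]

/-- Ando–van Hemmen: for positive definite `P, Q` with principal
square roots `P^{1/2}, Q^{1/2}`, one has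
`‖P^{1/2} − Q^{1/2}‖ ≤ ‖P − Q‖/(λ_min(P)^{1/2} + λ_min(Q)^{1/2})` in spectral norm. -/
theorem ando_van_hemmen {r : ℕ} [NeZero r]
    (P Q sP sQ : Matrix (Fin r) (Fin r) ℝ)
    (hP : P.PosDef) (hQ : Q.PosDef)
    (hsP : sP.PosDef) (hsQ : sQ.PosDef)
    (hsP2 : sP * sP = P) (hsQ2 : sQ * sQ = Q) :
    ‖sP - sQ‖ ≤ ‖P - Q‖ /
      (Real.sqrt (⨅ i, hP.1.eigenvalues i) + Real.sqrt (⨅ i, hQ.1.eigenvalues i)) :=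
  ando_van_hemmen_general P Q sP sQ hP hQ hsP hsQ hsP2 hsQ2
end

section
/- Let X^h_t(x) be a Gaussian random vector in ℝ^r with mean e^{Ft}x and covariance P_t, where F is a real r×r matrix, P_t = P∞ − e^{Ft}P∞e^{Fᵀt} for a positive definite P∞ satisfying P∞e^{Fᵀt} = e^{Ft}P∞ for all t ≥ 0. Define E_t = P∞^{−1/2} e^{Ft} P∞^{1/2} and assume E_t is symmetric. Then for all u, x ∈ ℝ^r: E[exp(uᵀP∞^{−1/2}X^h_t(x) − (1/2)uᵀu)] = exp((E_t u)ᵀ P∞^{−1/2}x − (1/2)(E_t u)ᵀ(E_t u)). -/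
/-!
The left side is the moment generating function of `μ` at `v = N u`, divided by `exp (uᵀu / 2)`.
Whitening by `N = P∞^{-1/2}` turns the covariance into `N P_t N = 1 - E_t²`, because `N P∞ N = 1`
and `P∞ e^{Fᵀt} = e^{Ft} P∞`; and the mean term becomes `uᵀ E_t N x` since `E_t N = N e^{Ft}`.
Symmetry of `N` and of `E_t` moves them across the dot products.
-/

open Matrix MeasureTheory

theorem mul_sub_mul_mul_eq_one_sub_mul_self {R : Type*} [Ring R] {N P e e' E : R}
    (hNPN : N * P * N = 1) (hPe : P * e' = e * P) (hEN : E * N = N * e) :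
    N * (P - e * P * e') * N = 1 - E * E := by
  have hEE : E * E = N * e * e * P * N :=
    calc E * E = E * E * (N * P * N) := by rw [hNPN, mul_one]
      _ = E * (E * N) * P * N := by noncomm_ring
      _ = N * e * e * P * N := by rw [hEN, ← mul_assoc, hEN]
  calc N * (P - e * P * e') * N = N * P * N - N * e * (P * e') * N := by noncomm_ring
    _ = 1 - E * E := by rw [hNPN, hPe, hEE]; noncomm_ring

namespace Matrix

variable {n R : Type*} [Fintype n] [CommRing R]

theorem IsSymm.mulVec_dotProduct {A : Matrix n n R} (hA : A.IsSymm) (u v : n → R) :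
    A *ᵥ u ⬝ᵥ v = u ⬝ᵥ A *ᵥ v := by
  conv_rhs => rw [← hA.eq]
  rw [dotProduct_transpose_mulVec, dotProduct_comm]

theorem IsSymm.mulVec_dotProduct_mulVec_mulVec {N : Matrix n n R} (hN : N.IsSymm)
    (P : Matrix n n R) (u : n → R) :
    N *ᵥ u ⬝ᵥ P *ᵥ (N *ᵥ u) = u ⬝ᵥ (N * P * N) *ᵥ u := by
  rw [hN.mulVec_dotProduct, mulVec_mulVec, mulVec_mulVec, Matrix.mul_assoc]

theorem IsSymm.mulVec_dotProduct_mulVec_of_mul_eq {N E e : Matrix n n R} (hN : N.IsSymm)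
    (hE : E.IsSymm) (hEN : E * N = N * e) (u x : n → R) :
    N *ᵥ u ⬝ᵥ e *ᵥ x = E *ᵥ u ⬝ᵥ N *ᵥ x := by
  rw [hN.mulVec_dotProduct, mulVec_mulVec, ← hEN, ← mulVec_mulVec, hE.mulVec_dotProduct]

variable [DecidableEq n]

theorem IsSymm.dotProduct_one_sub_mul_self_mulVec {E : Matrix n n R} (hE : E.IsSymm)
    (u : n → R) : u ⬝ᵥ (1 - E * E) *ᵥ u = u ⬝ᵥ u - E *ᵥ u ⬝ᵥ E *ᵥ u := by
  rw [sub_mulVec, one_mulVec, dotProduct_sub, ← mulVec_mulVec, hE.mulVec_dotProduct]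

end Matrix

theorem hermite_generating_identity_general {r : ℕ} (F Pinf N : Matrix (Fin r) (Fin r) ℝ)
    (t : ℝ) (ht : 0 ≤ t) (x : Fin r → ℝ)
    (hPinf : Pinf.PosDef) (hN : N.PosDef) (hN2 : N * N = Pinf⁻¹)
    (hcomm : ∀ s : ℝ, 0 ≤ s →
      Pinf * NormedSpace.exp (s • Fᵀ) = NormedSpace.exp (s • F) * Pinf)
    (Pt : Matrix (Fin r) (Fin r) ℝ)
    (hPt : Pt = Pinf - NormedSpace.exp (t • F) * Pinf * NormedSpace.exp (t • Fᵀ))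
    (Et : Matrix (Fin r) (Fin r) ℝ)
    (hEt : Et = N * NormedSpace.exp (t • F) * N⁻¹)
    (hEtsymm : Etᵀ = Et)
    (μ : Measure (Fin r → ℝ))
    (hmgf : ∀ v : Fin r → ℝ,
      (∫ y, Real.exp (v ⬝ᵥ y) ∂μ)
        = Real.exp (v ⬝ᵥ (NormedSpace.exp (t • F)).mulVec x
            + (1 / 2) * (v ⬝ᵥ Pt.mulVec v))) :
    ∀ u : Fin r → ℝ,
      (∫ y, Real.exp (u ⬝ᵥ N.mulVec y - (1 / 2) * (u ⬝ᵥ u)) ∂μ)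
        = Real.exp ((Et.mulVec u) ⬝ᵥ N.mulVec x
            - (1 / 2) * ((Et.mulVec u) ⬝ᵥ Et.mulVec u)) := by
  intro u
  have hNsymm : N.IsSymm := hN.isHermitian
  have hEsymm : Et.IsSymm := hEtsymm
  have hNPN : N * Pinf * N = 1 := mul_eq_one_comm.1 <| by
    rw [← Matrix.mul_assoc, hN2, nonsing_inv_mul _ ((isUnit_iff_isUnit_det _).1 hPinf.isUnit)]
  have hEN : Et * N = N * NormedSpace.exp (t • F) := by
    rw [hEt, Matrix.mul_assoc, nonsing_inv_mul _ ((isUnit_iff_isUnit_det _).1 hN.isUnit),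
      Matrix.mul_one]
  have hwhite : N * Pt * N = 1 - Et * Et :=
    hPt ▸ mul_sub_mul_mul_eq_one_sub_mul_self hNPN (hcomm t ht) hEN
  calc (∫ y, Real.exp (u ⬝ᵥ N *ᵥ y - (1 / 2) * (u ⬝ᵥ u)) ∂μ)
      = (∫ y, Real.exp (N *ᵥ u ⬝ᵥ y) ∂μ) / Real.exp ((1 / 2) * (u ⬝ᵥ u)) := by
        simp_rw [Real.exp_sub, ← hNsymm.mulVec_dotProduct]
        exact integral_div _ _
    _ = Real.exp (Et *ᵥ u ⬝ᵥ N *ᵥ x - (1 / 2) * (Et *ᵥ u ⬝ᵥ Et *ᵥ u)) := by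
        rw [hmgf, ← Real.exp_sub, hNsymm.mulVec_dotProduct_mulVec_of_mul_eq hEsymm hEN,
          hNsymm.mulVec_dotProduct_mulVec_mulVec, hwhite,
          hEsymm.dotProduct_one_sub_mul_self_mulVec]
        ring_nf

/-- the exponential-moment (Hermite generating function) identity
for the Gaussian random vector `X^h_t(x)` with mean `e^{Ft}x` and covariance
`P_t = Pinf − e^{Ft}Pinfe^{Fᵀt}`. The law `μ` of `X^h_t(x)` is specified through its
moment generating function, and `N = Pinf^{−1/2}`, `E_t = Pinf^{−1/2}e^{Ft}Pinf^{1/2}`. -/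
theorem hermite_generating_identity {r : ℕ} (F Pinf N : Matrix (Fin r) (Fin r) ℝ)
    (t : ℝ) (ht : 0 ≤ t) (x : Fin r → ℝ)
    (hPinf : Pinf.PosDef) (hN : N.PosDef) (hN2 : N * N = Pinf⁻¹)
    (hcomm : ∀ s : ℝ, 0 ≤ s →
      Pinf * NormedSpace.exp (s • Fᵀ) = NormedSpace.exp (s • F) * Pinf)
    (Pt : Matrix (Fin r) (Fin r) ℝ)
    (hPt : Pt = Pinf - NormedSpace.exp (t • F) * Pinf * NormedSpace.exp (t • Fᵀ))
    (Et : Matrix (Fin r) (Fin r) ℝ)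
    (hEt : Et = N * NormedSpace.exp (t • F) * N⁻¹)
    (hEtsymm : Etᵀ = Et)
    (μ : Measure (Fin r → ℝ)) [IsProbabilityMeasure μ]
    (hmgf : ∀ v : Fin r → ℝ,
      (∫ y, Real.exp (v ⬝ᵥ y) ∂μ)
        = Real.exp (v ⬝ᵥ (NormedSpace.exp (t • F)).mulVec x
            + (1 / 2) * (v ⬝ᵥ Pt.mulVec v))) :
    ∀ u : Fin r → ℝ,
      (∫ y, Real.exp (u ⬝ᵥ N.mulVec y - (1 / 2) * (u ⬝ᵥ u)) ∂μ)
        = Real.exp ((Et.mulVec u) ⬝ᵥ N.mulVec x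
            - (1 / 2) * ((Et.mulVec u) ⬝ᵥ Et.mulVec u)) :=
  hermite_generating_identity_general F Pinf N t ht x hPinf hN hN2 hcomm Pt hPt Et hEt hEtsymm μ
    hmgf
end
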